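/- Let q be a prime power, m ≥ 2 and n ≤ q^m be integers, L = (α_1, …, α_n) an n-tuple of distinct elements of F_{q^m}, and G ∈ F_{q^m}[X] a square-free polynomial not vanishing at any element of L with 0 < deg(G) < n/q. Then every nonzero codeword of Γ_q(L, G^{q−1}) has Hamming weight at least q·deg(G) + 1. -/

import Mathlib

open Polynomial


/-- Lucas-type: if `p^s ∣ M` and `0 < b < p^s` then `p ∣ C(M,b)`. -/
lemma prime_dvd_choose_of_pow_dvd {p : ℕ} (hp : p.Prime) :
    ∀ (s M b : ℕ), p ^ s ∣ M → 0 < b → b < p ^ s → p ∣ M.choose b := by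
  intro s
  induction s with
  | zero => intro M b _ hb0 hb1; simp at hb1; omega
  | succ s ih =>
    intro M b hM hb0 hbq
    haveI : Fact p.Prime := ⟨hp⟩
    have hlucas := @Choose.choose_modEq_choose_mod_mul_choose_div_nat M b p _
    have hp1 : 1 < p := hp.one_lt
    have hpM : p ∣ M := dvd_trans (dvd_pow_self p (Nat.succ_ne_zero s)) hM
    have hMp : M % p = 0 := by obtain ⟨t, ht⟩ := hpM; rw [ht]; exact Nat.mul_mod_right p t
    rw [hMp] at hlucas
    rcases Nat.eq_zero_or_pos (b % p) with hbp | hbp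
    · -- p ∣ b, recurse
      have hpb : p ∣ b := Nat.dvd_of_mod_eq_zero hbp
      have h1 : 0 < b / p := Nat.div_pos (Nat.le_of_dvd hb0 hpb) (by omega)
      have h2 : b / p < p ^ s := by
        rw [Nat.div_lt_iff_lt_mul (by omega)]
        calc b < p ^ (s+1) := hbq
        _ = p ^ s * p := by rw [pow_succ]
      have h3 : p ^ s ∣ M / p := by
        obtain ⟨t, ht⟩ := hM
        subst ht
        rw [pow_succ, mul_comm (p^s) p, mul_assoc, Nat.mul_div_cancel_left _ (by omega : 0 < p)]
        exact Dvd.intro t rfl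
      have := ih (M / p) (b / p) h3 h1 h2
      rw [hbp, Nat.choose_zero_right, one_mul] at hlucas
      exact (Nat.modEq_zero_iff_dvd.1 ((hlucas.trans ((Nat.modEq_zero_iff_dvd).2 this))))
    · -- choose 0 (b % p) = 0
      rw [Nat.choose_eq_zero_of_lt hbp, zero_mul] at hlucas
      exact Nat.modEq_zero_iff_dvd.1 hlucas

/-- Hasse derivative of a `p^s`-th power vanishes for orders `0 < b < p^s`, in char `p`. -/
lemma hasseDeriv_pow_prime_pow_eq_zero {K : Type*} [CommRing K] (p : ℕ) [Fact p.Prime]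
    [CharP K p] (s : ℕ) (v : K[X]) (b : ℕ) (hb0 : 0 < b) (hbq : b < p ^ s) :
    hasseDeriv b (v ^ p ^ s) = 0 := by
  have hq0 : 0 < p ^ s := pow_pos (Fact.out (p := p.Prime)).pos s
  ext n
  rw [hasseDeriv_coeff, coeff_zero]
  by_cases hdvd : p ^ s ∣ (n + b)
  · have : (((n + b).choose b : ℕ) : K) = 0 :=
      (CharP.cast_eq_zero_iff K p _).2
        (prime_dvd_choose_of_pow_dvd Fact.out s (n + b) b hdvd hb0 hbq)
    rw [this, zero_mul]
  · have : (v ^ p ^ s).coeff (n + b) = 0 := by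
      rw [← Polynomial.map_iterateFrobenius_expand p, coeff_map, Polynomial.coeff_expand hq0]
      simp [hdvd]
    rw [this, mul_zero]

/-- `P^(e-j) ∣ D^(j)(P^e)`. -/
lemma pow_dvd_hasseDeriv_pow {K : Type*} [CommRing K] (P : K[X]) :
    ∀ (e j : ℕ), P ^ (e - j) ∣ hasseDeriv j (P ^ e) := by
  intro e
  induction e with
  | zero => intro j; simp only [Nat.zero_sub, pow_zero]; exact one_dvd _
  | succ e ih =>
    intro j
    rw [pow_succ, hasseDeriv_mul]
    apply Finset.dvd_sum
    rintro ⟨a, b⟩ hab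
    rw [Finset.HasAntidiagonal.mem_antidiagonal] at hab
    rcases Nat.eq_zero_or_pos b with hb | hb
    · subst hb
      simp only [hasseDeriv_zero']
      calc P ^ (e + 1 - j) ∣ P ^ (e - j + 1) := pow_dvd_pow _ (by omega)
        _ = P ^ (e - j) * P := pow_succ _ _
        _ ∣ hasseDeriv a (P ^ e) * P := mul_dvd_mul (by
            have := ih a
            simpa [show a = j by omega] using this) dvd_rfl
    · exact ((pow_dvd_pow P (by omega : e + 1 - j ≤ e - a)).trans (ih a)).mul_right _

/-- `D^(k)(P^k) ≡ (P')^k mod P`. -/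
lemma dvd_hasseDeriv_pow_self_sub {K : Type*} [CommRing K] (P : K[X]) :
    ∀ k : ℕ, P ∣ hasseDeriv k (P ^ k) - (derivative P) ^ k := by
  intro k
  induction k with
  | zero => simp [hasseDeriv_zero']
  | succ k ih =>
    rw [pow_succ, hasseDeriv_mul]
    have hmem : ((k, 1) : ℕ × ℕ) ∈ Finset.HasAntidiagonal.antidiagonal (k + 1) := by
      simp
    rw [← Finset.add_sum_erase _ _ hmem]
    have h1 : P ∣ ∑ x ∈ (Finset.HasAntidiagonal.antidiagonal (k + 1)).erase (k, 1),
        hasseDeriv x.1 (P ^ k) * hasseDeriv x.2 P := by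
      apply Finset.dvd_sum
      rintro ⟨a, b⟩ hx
      rw [Finset.mem_erase, Finset.HasAntidiagonal.mem_antidiagonal] at hx
      rcases Nat.eq_zero_or_pos b with hb | hb
      · subst hb
        simp only [hasseDeriv_zero']
        exact Dvd.dvd.mul_left dvd_rfl _
      · by_cases hb1 : b = 1
        · exact absurd (by rw [Prod.mk.injEq]; exact ⟨by omega, hb1⟩) hx.1
        · have : P ∣ P ^ (k - a) := dvd_pow_self P (by omega)
          exact (this.trans (pow_dvd_hasseDeriv_pow P k a)).mul_right _
    have h2 : P ∣ hasseDeriv k (P ^ k) * hasseDeriv 1 P - derivative P ^ (k + 1) := by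
      rw [hasseDeriv_one']
      have : hasseDeriv k (P ^ k) * derivative P - derivative P ^ (k + 1)
          = (hasseDeriv k (P ^ k) - derivative P ^ k) * derivative P := by ring
      rw [this]
      exact ih.mul_right _
    have : hasseDeriv k (P ^ k) * hasseDeriv 1 P +
          (∑ x ∈ (Finset.HasAntidiagonal.antidiagonal (k + 1)).erase (k, 1),
            hasseDeriv x.1 (P ^ k) * hasseDeriv x.2 P) - derivative P ^ (k + 1)
        = (hasseDeriv k (P ^ k) * hasseDeriv 1 P - derivative P ^ (k + 1)) +
          ∑ x ∈ (Finset.HasAntidiagonal.antidiagonal (k + 1)).erase (k, 1),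
            hasseDeriv x.1 (P ^ k) * hasseDeriv x.2 P := by ring
    rw [this]
    exact dvd_add h2 h1

/-- `D^(k)` of a polynomial of degree ≤ k is the constant given by the k-th coefficient. -/
lemma hasseDeriv_of_natDegree_le {K : Type*} [CommRing K] (f : K[X]) (k : ℕ)
    (hd : f.natDegree ≤ k) : hasseDeriv k f = C (f.coeff k) := by
  ext n
  rw [hasseDeriv_coeff, coeff_C]
  cases n with
  | zero => simp
  | succ n =>
    rw [coeff_eq_zero_of_natDegree_lt (by omega), mul_zero]
    simp

/-- Key identity: `D^(q-1)((X-a)^(q-1) v^q) = v^q` for `q = p^s` in char `p`. -/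
lemma hasseDeriv_key {K : Type*} [Field K] (p : ℕ) [Fact p.Prime] [CharP K p] (s : ℕ)
    (a : K) (v : K[X]) :
    hasseDeriv (p ^ s - 1) ((X - C a) ^ (p ^ s - 1) * v ^ p ^ s) = v ^ p ^ s := by
  have hq0 : 0 < p ^ s := pow_pos (Fact.out (p := p.Prime)).pos s
  rw [hasseDeriv_mul]
  have hmem : ((p ^ s - 1, 0) : ℕ × ℕ) ∈ Finset.HasAntidiagonal.antidiagonal (p ^ s - 1) := by
    simp
  rw [← Finset.add_sum_erase _ _ hmem]
  have h2 : ∑ x ∈ (Finset.HasAntidiagonal.antidiagonal (p ^ s - 1)).erase (p ^ s - 1, 0),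
      hasseDeriv x.1 ((X - C a) ^ (p ^ s - 1)) * hasseDeriv x.2 (v ^ p ^ s) = 0 := by
    apply Finset.sum_eq_zero
    rintro ⟨x1, x2⟩ hx
    rw [Finset.mem_erase, Finset.HasAntidiagonal.mem_antidiagonal] at hx
    have hx2 : 0 < x2 := by
      rcases Nat.eq_zero_or_pos x2 with h | h
      · exfalso; apply hx.1; subst h; ext <;> simp <;> omega
      · exact h
    rw [hasseDeriv_pow_prime_pow_eq_zero p s v x2 hx2 (by omega), mul_zero]
  rw [h2, add_zero, hasseDeriv_zero']
  have h3 : hasseDeriv (p ^ s - 1) ((X - C a) ^ (p ^ s - 1)) = 1 := by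
    have hdeg : ((X - C a) ^ (p ^ s - 1)).natDegree = p ^ s - 1 := by
      simp [natDegree_pow, natDegree_X_sub_C]
    rw [hasseDeriv_of_natDegree_le _ _ hdeg.le]
    have hc : ((X - C a) ^ (p ^ s - 1)).coeff (p ^ s - 1) = 1 := by
      have := ((monic_X_sub_C a).pow (p ^ s - 1)).coeff_natDegree
      rwa [hdeg] at this
    rw [hc, map_one]
  rw [h3, one_mul]

/-- The q-ary classical Goppa code `Γ_q(L,H)`: the set of words `c ∈ F_q^n` such that
`H(X)` divides `Σ_i c_i ∏_{j≠i} (X - α_j)`, where `F_q` is embedded in `F_{q^m}`. -/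
def goppaCode (Fq K : Type*) [Field Fq] [Field K] [Algebra Fq K] {n : ℕ}
    (α : Fin n → K) (H : K[X]) : Set (Fin n → Fq) :=
  { c | H ∣ ∑ i, Polynomial.C (algebraMap Fq K (c i)) *
        ∏ j ∈ Finset.univ.erase i, (Polynomial.X - Polynomial.C (α j)) }

/-- Designed distance of `Γ_q(L, G^(q-1))` for square-free `G`: every nonzero codeword
has Hamming weight at least `q·deg(G) + 1`. -/
theorem goppa_squarefree_designed_distance
    (q m n : ℕ) (hq : IsPrimePow q) (hm : 2 ≤ m)
    (Fq K : Type*) [Field Fq] [Fintype Fq] [DecidableEq Fq]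
    [Field K] [Fintype K] [Algebra Fq K]
    (hcardq : Fintype.card Fq = q) (hcardK : Fintype.card K = q ^ m)
    (hn : n ≤ q ^ m)
    (α : Fin n → K) (hα : Function.Injective α)
    (G : K[X]) (hsf : Squarefree G)
    (hGα : ∀ i, G.eval (α i) ≠ 0)
    (hdeg : 0 < G.natDegree) (hdegn : q * G.natDegree < n) :
    ∀ c ∈ goppaCode Fq K α (G ^ (q - 1)), c ≠ 0 →
      q * G.natDegree + 1 ≤ hammingNorm c := by
  classical
  intro c hc hc0
  simp only [goppaCode, Set.mem_setOf_eq] at hc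
  -- characteristic setup
  haveI : CharP Fq (ringChar Fq) := ringChar.charP Fq
  obtain ⟨s', hp, hqcard⟩ := FiniteField.card Fq (ringChar Fq)
  set p := ringChar Fq with hpdef
  haveI hfact : Fact p.Prime := ⟨hp⟩
  set s : ℕ := (s' : ℕ) with hsdef
  have hs : 0 < s := s'.2
  have hqps : q = p ^ s := by rw [← hcardq, hqcard]
  haveI hKp : CharP K p := charP_of_injective_algebraMap (algebraMap Fq K).injective p
  have hq2 : 2 ≤ q := hq.two_le
  set k := q - 1 with hk
  have hkq : k + 1 = q := by omega
  have hk1 : 1 ≤ k := by omega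
  -- definitions
  set c' : Fin n → K := fun i => algebraMap Fq K (c i) with hc'def
  set S : Finset (Fin n) := Finset.univ.filter (fun i => c i ≠ 0) with hSdef
  have hSmem : ∀ i, i ∈ S ↔ c i ≠ 0 := fun i => by simp [hSdef]
  set u : Fin n → K[X] := fun i => ∏ j ∈ S.erase i, (X - C (α j)) with hudef
  set g : K[X] := ∏ j ∈ S, (X - C (α j)) with hgdef
  set r : K[X] := ∏ j ∈ Finset.univ \ S, (X - C (α j)) with hrdef
  set h : K[X] := ∑ i ∈ S, C (c' i) * u i with hhdef
  -- Step A : the syndrome polynomial factors as h * r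
  have hf : (∑ i, C (algebraMap Fq K (c i)) * ∏ j ∈ Finset.univ.erase i, (X - C (α j)))
      = h * r := by
    have h1 : (∑ i, C (algebraMap Fq K (c i)) * ∏ j ∈ Finset.univ.erase i, (X - C (α j)))
        = ∑ i ∈ S, C (c' i) * ∏ j ∈ Finset.univ.erase i, (X - C (α j)) := by
      refine (Finset.sum_subset (Finset.subset_univ S) ?_).symm
      intro i _ hiS
      have : c i = 0 := by
        by_contra hne
        exact hiS ((hSmem i).2 hne)
      rw [this, map_zero, map_zero, zero_mul]
    rw [h1, hhdef, Finset.sum_mul]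
    apply Finset.sum_congr rfl
    intro i hi
    rw [mul_assoc]
    congr 1
    have hsplit : Finset.univ.erase i = (S.erase i) ∪ (Finset.univ \ S) := by
      ext j
      simp only [Finset.mem_erase, Finset.mem_union, Finset.mem_sdiff, Finset.mem_univ,
        true_and, and_true]
      constructor
      · intro hj
        by_cases hjS : j ∈ S
        · exact Or.inl ⟨hj, hjS⟩
        · exact Or.inr hjS
      · rintro (⟨hj, _⟩ | hjS)
        · exact hj
        · intro hji; subst hji; exact hjS hi
    have hdisj : Disjoint (S.erase i) (Finset.univ \ S) :=
      Finset.disjoint_left.mpr fun j hj hj' =>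
        (Finset.mem_sdiff.1 hj').2 (Finset.mem_of_mem_erase hj)
    rw [hsplit, Finset.prod_union hdisj]
  -- coprimality
  have hcopG : ∀ a : K, G.eval a ≠ 0 → IsCoprime G (X - C a) := by
    intro a ha
    exact ((irreducible_X_sub_C a).coprime_iff_not_dvd.2
      (fun hdvd => ha (dvd_iff_isRoot.1 hdvd))).symm
  have hcopr : IsCoprime G r :=
    IsCoprime.prod_right fun j _ => hcopG (α j) (hGα j)
  have hcopg : IsCoprime G g :=
    IsCoprime.prod_right fun j _ => hcopG (α j) (hGα j)
  have hdvd_h : G ^ k ∣ h := (hcopr.pow_left).dvd_of_dvd_mul_right (hf ▸ hc)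
  -- Step B : key identity  hasseDeriv k (h * g^k) = h^q
  haveI : ExpChar K p := ExpChar.prime hp
  haveI : ExpChar K[X] p := expChar_of_injective_ringHom (R := K) C_injective p
  have hc'pow : ∀ i, (c' i) ^ q = c' i := by
    intro i
    rw [hc'def]
    dsimp only
    rw [← map_pow, ← hcardq, FiniteField.pow_card]
  have hfrob : h ^ q = ∑ i ∈ S, C (c' i) * (u i) ^ q := by
    rw [hhdef, hqps, sum_pow_char_pow]
    apply Finset.sum_congr rfl
    intro i _
    rw [mul_pow, ← map_pow, ← hqps, hc'pow]
  have hkey : hasseDeriv k (h * g ^ k) = h ^ q := by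
    have hdecomp : h * g ^ k = ∑ i ∈ S, C (c' i) * ((X - C (α i)) ^ k * (u i) ^ q) := by
      rw [hhdef, Finset.sum_mul]
      apply Finset.sum_congr rfl
      intro i hi
      rw [mul_assoc]
      congr 1
      have hgi : g = (X - C (α i)) * u i := (Finset.mul_prod_erase S _ hi).symm
      rw [hgi, mul_pow, show q = k + 1 from by omega]
      ring
    rw [hdecomp, map_sum, hfrob]
    apply Finset.sum_congr rfl
    intro i _
    have hT : hasseDeriv k ((X - C (α i)) ^ k * (u i) ^ q) = (u i) ^ q := by
      rw [hqps, show k = p ^ s - 1 from by omega]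
      exact hasseDeriv_key p s (α i) (u i)
    rw [← smul_eq_C_mul, map_smul, hT, smul_eq_C_mul]
  -- Step C : G^q ∣ h
  obtain ⟨w, hw⟩ := hdvd_h
  have hsep : IsCoprime G (derivative G) := PerfectField.separable_iff_squarefree.mpr hsf
  have hGq : G ^ q ∣ h := by
    have hGh : G ∣ h := (dvd_pow_self G (by omega : k ≠ 0)).trans ⟨w, hw⟩
    have hGhq : G ∣ h ^ q := hGh.trans (dvd_pow_self h (by omega : q ≠ 0))
    have hexp : h * g ^ k = G ^ k * (w * g ^ k) := by rw [hw]; ring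
    have hdvd2 : G ∣ hasseDeriv k (G ^ k * (w * g ^ k)) - derivative G ^ k * (w * g ^ k) := by
      rw [hasseDeriv_mul]
      have hmem : ((k, 0) : ℕ × ℕ) ∈ Finset.HasAntidiagonal.antidiagonal k := by simp
      rw [← Finset.add_sum_erase _ _ hmem]
      have hrest : G ∣ ∑ x ∈ (Finset.HasAntidiagonal.antidiagonal k).erase (k, 0),
          hasseDeriv x.1 (G ^ k) * hasseDeriv x.2 (w * g ^ k) := by
        apply Finset.dvd_sum
        rintro ⟨a, b⟩ hx
        rw [Finset.mem_erase, Finset.HasAntidiagonal.mem_antidiagonal] at hx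
        have hak : a < k := by
          rcases Nat.lt_or_ge a k with hlt | hge
          · exact hlt
          · exfalso
            apply hx.1
            rw [Prod.mk.injEq]
            exact ⟨by omega, by omega⟩
        have : G ∣ G ^ (k - a) := dvd_pow_self G (by omega)
        exact (this.trans (pow_dvd_hasseDeriv_pow G k a)).mul_right _
      have hmain : G ∣ hasseDeriv k (G ^ k) * hasseDeriv 0 (w * g ^ k)
          - derivative G ^ k * (w * g ^ k) := by
        rw [hasseDeriv_zero']
        have : hasseDeriv k (G ^ k) * (w * g ^ k) - derivative G ^ k * (w * g ^ k)
            = (hasseDeriv k (G ^ k) - derivative G ^ k) * (w * g ^ k) := by ring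
        rw [this]
        exact (dvd_hasseDeriv_pow_self_sub G k).mul_right _
      have harr : hasseDeriv k (G ^ k) * hasseDeriv 0 (w * g ^ k) +
            (∑ x ∈ (Finset.HasAntidiagonal.antidiagonal k).erase (k, 0),
              hasseDeriv x.1 (G ^ k) * hasseDeriv x.2 (w * g ^ k))
            - derivative G ^ k * (w * g ^ k)
          = (hasseDeriv k (G ^ k) * hasseDeriv 0 (w * g ^ k)
              - derivative G ^ k * (w * g ^ k)) +
            ∑ x ∈ (Finset.HasAntidiagonal.antidiagonal k).erase (k, 0),
              hasseDeriv x.1 (G ^ k) * hasseDeriv x.2 (w * g ^ k) := by ring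
      rw [harr]
      exact dvd_add hmain hrest
    rw [← hexp, hkey] at hdvd2
    have hT : G ∣ derivative G ^ k * (w * g ^ k) := by
      have := dvd_sub hGhq hdvd2
      simpa using this
    have hGw1 : G ∣ w * g ^ k := (hsep.pow_right).dvd_of_dvd_mul_left hT
    have hGw : G ∣ w := (hcopg.pow_right).dvd_of_dvd_mul_right hGw1
    obtain ⟨w2, hw2⟩ := hGw
    refine ⟨w2, ?_⟩
    rw [hw, hw2, show q = k + 1 from by omega]
    ring
  -- Step D : h ≠ 0 and degree count
  have hSne : S.Nonempty := by
    obtain ⟨i0, hi0⟩ := Function.ne_iff.1 hc0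
    exact ⟨i0, (hSmem i0).2 hi0⟩
  obtain ⟨i0, hi0⟩ := hSne
  have hc'ne : ∀ i ∈ S, c' i ≠ 0 := by
    intro i hi hz
    rw [hc'def] at hz
    exact (hSmem i).1 hi ((_root_.map_eq_zero (algebraMap Fq K)).1 hz)
  have hhne : h ≠ 0 := by
    intro h0
    have heval : h.eval (α i0) = c' i0 * (u i0).eval (α i0) := by
      rw [hhdef, eval_finset_sum]
      rw [Finset.sum_eq_single i0]
      · rw [eval_mul, eval_C]
      · intro i hi hne
        have hz : (u i).eval (α i0) = 0 := by
          rw [hudef]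
          dsimp only
          rw [eval_prod]
          apply Finset.prod_eq_zero (Finset.mem_erase.2 ⟨hne.symm, hi0⟩)
          simp
        rw [eval_mul, hz, mul_zero]
      · intro hns; exact absurd hi0 hns
    have hune : (u i0).eval (α i0) ≠ 0 := by
      rw [hudef]
      dsimp only
      rw [eval_prod]
      apply Finset.prod_ne_zero_iff.2
      intro j hj
      simp only [eval_sub, eval_X, eval_C]
      refine sub_ne_zero.2 fun he => ?_
      exact (Finset.mem_erase.1 hj).1 (hα he.symm)
    rw [h0, eval_zero] at heval
    exact mul_ne_zero (hc'ne i0 hi0) hune heval.symm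
  have hdegh : h.natDegree ≤ S.card - 1 := by
    rw [hhdef]
    apply Polynomial.natDegree_sum_le_of_forall_le
    intro i hi
    refine (natDegree_C_mul_le _ _).trans ?_
    rw [hudef]
    dsimp only
    rw [natDegree_prod_of_monic _ _ (fun j _ => monic_X_sub_C _)]
    have : ∑ j ∈ S.erase i, (X - C (α j)).natDegree = (S.erase i).card := by
      rw [Finset.sum_congr rfl fun j _ => natDegree_X_sub_C (α j)]
      simp
    rw [this, Finset.card_erase_of_mem hi]
  have hdegGq : q * G.natDegree ≤ h.natDegree := by
    have := Polynomial.natDegree_le_of_dvd hGq hhne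
    rwa [natDegree_pow] at this
  have hS1 : 1 ≤ S.card := Finset.card_pos.2 ⟨i0, hi0⟩
  have hnorm : hammingNorm c = S.card := rfl
  omega
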